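/- Let p be an odd prime, n ≥ 1, and a ∈ ℤ_p with v_p(a) = 1. With C_i := [[a, 1], [−Φ_i, 0]] ∈ M_2(ℤ_p[X]) and H_n := C_n·C_{n−1}···C_1, write (H_n^♯, H_n^♭) for the first row of H_n, and evaluate all entries at ε_n = ζ_{p^n} − 1. Then both entries of the second row of H_n(ε_n) are zero, and: if n is odd, v_p(H_n^♯(ε_n)) = 1 + Σ_{i=1}^{(n−1)/2} p^{−2i} and v_p(H_n^♭(ε_n)) = Σ_{i=1}^{(n−1)/2} p^{−(2i−1)}; if n is even, v_p(H_n^♯(ε_n)) = Σ_{i=1}^{n/2} p^{−(2i−1)} and v_p(H_n^♭(ε_n)) = 1 + Σ_{i=1}^{n/2−1} p^{−2i}. -/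

import Mathlib

/-!
Write `w` for the valuation and `q = p⁻¹`. For a primitive `p^(k+1)`-th root `ξ`, the
factorisation `p = Φ_{p^(k+1)}(1) = ∏ (1 - μ)` over the `φ(p^(k+1))` primitive roots `μ`, all of
which satisfy `w (1 - μ) = w (ξ - 1)`, gives `w (ξ - 1) = 1 / φ(p^(k+1))`. Since
`ω_j(ε_n) = ζ^(p^j) - 1`, this yields `w (Φ_i(ε_n)) = q^(n-i)` for `i < n` and `Φ_n(ε_n) = 0`,
which kills the second row. The first row of `H_m` satisfies `x_{m+2} = a x_{m+1} - Φ_{m+1} x_m`;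
as `w a = 1` and the `w (Φ_i(ε_n))` increase strictly and stay below `2`, the two terms never have
the same valuation: the `Φ`-term wins at even `m`, the `a`-term at odd `m`, so the valuations add
up along the recursion.
-/

/-- `ω_m = (1+X)^{p^m} − 1` in `ℤ_p[X]`. -/
noncomputable def omegaPoly (p : ℕ) [Fact p.Prime] (m : ℕ) : Polynomial ℤ_[p] :=
  (1 + Polynomial.X) ^ (p ^ m) - 1

open Polynomial Finset

section
variable {K : Type*} [Field K]

open Classical in
noncomputable def addValuationOfFun (v : K → ℚ)
    (hv_mul : ∀ x y : K, x ≠ 0 → y ≠ 0 → v (x * y) = v x + v y)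
    (hv_add : ∀ x y : K, x ≠ 0 → y ≠ 0 → x + y ≠ 0 → min (v x) (v y) ≤ v (x + y)) :
    AddValuation K (WithTop ℚ) :=
  AddValuation.of (fun x => if x = 0 then ⊤ else (v x : WithTop ℚ)) (if_pos rfl)
    (by
      have h := hv_mul 1 1 one_ne_zero one_ne_zero
      rw [mul_one, left_eq_add] at h
      simp [h])
    (fun x y => by
      by_cases hx : x = 0
      · simp [hx]
      by_cases hy : y = 0
      · simp [hy]
      by_cases hxy : x + y = 0
      · simp [hxy]
      simp only [if_neg hx, if_neg hy, if_neg hxy]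
      exact_mod_cast hv_add x y hx hy hxy)
    (fun x y => by
      by_cases hx : x = 0
      · simp [hx]
      by_cases hy : y = 0
      · simp [hy]
      simp only [if_neg hx, if_neg hy, if_neg (mul_ne_zero hx hy)]
      exact_mod_cast hv_mul x y hx hy)

theorem addValuationOfFun_apply {v : K → ℚ} {hv_mul hv_add} {x : K} (hx : x ≠ 0) :
    addValuationOfFun v hv_mul hv_add x = v x := by
  simp [addValuationOfFun, hx]

theorem eq_of_addValuationOfFun_eq_coe {v : K → ℚ} {hv_mul hv_add} {x : K} {r : ℚ}
    (h : addValuationOfFun v hv_mul hv_add x = r) : v x = r := by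
  have hx : x ≠ 0 := (AddValuation.ne_top_iff _).1 (by rw [h]; exact WithTop.coe_ne_top)
  rwa [addValuationOfFun_apply hx, WithTop.coe_inj] at h

theorem addValuationOfFun_algebraMap {p : ℕ} [Fact p.Prime] [Algebra ℚ_[p] K] {v : K → ℚ}
    {hv_mul hv_add} (hv_ext : ∀ x : ℚ_[p], x ≠ 0 → v (algebraMap ℚ_[p] K x) = (x.valuation : ℚ))
    {x : ℚ_[p]} (hx : x ≠ 0) :
    addValuationOfFun v hv_mul hv_add (algebraMap ℚ_[p] K x) = ((x.valuation : ℚ) : WithTop ℚ) := by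
  rw [addValuationOfFun_apply ((_root_.map_ne_zero _).2 hx), hv_ext x hx]

end

namespace AddValuation

variable {K : Type*} [Field K]

theorem map_eq_zero_of_pow_eq_one (w : AddValuation K (WithTop ℚ)) {ξ : K} {N : ℕ} (hN : N ≠ 0)
    (hξ : ξ ^ N = 1) : w ξ = 0 := by
  have hξ0 : ξ ≠ 0 := by rintro rfl; simp [zero_pow hN] at hξ
  obtain ⟨r, hr⟩ := WithTop.ne_top_iff_exists.1 ((w.ne_top_iff).2 hξ0)
  have h := w.map_pow ξ N
  rw [hξ, w.map_one, ← hr] at h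
  have : N • r = 0 := by exact_mod_cast h.symm
  rw [← hr, (smul_eq_zero.1 this).resolve_left hN]
  rfl

theorem map_prod {Γ₀ : Type*} [LinearOrderedAddCommMonoidWithTop Γ₀] (w : AddValuation K Γ₀)
    {ι : Type*} (s : Finset ι) (f : ι → K) : w (∏ i ∈ s, f i) = ∑ i ∈ s, w (f i) :=
  _root_.map_prod (toValuation w) f s

theorem map_sub_one_le_map_pow_sub_one {Γ₀ : Type*} [LinearOrderedAddCommMonoidWithTop Γ₀]
    (w : AddValuation K Γ₀) {ξ : K} (hξ : w ξ = 0) (t : ℕ) : w (ξ - 1) ≤ w (ξ ^ t - 1) := by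
  rw [← geom_sum_mul, w.map_mul]
  refine le_add_of_nonneg_left (w.map_le_sum fun i _ => ?_)
  rw [w.map_pow, hξ, nsmul_zero]

variable (w : AddValuation K (WithTop ℚ))

theorem map_sub_one_eq_of_isPrimitiveRoot {N : ℕ} [NeZero N] {ξ μ : K}
    (hξ : IsPrimitiveRoot ξ N) (hμ : IsPrimitiveRoot μ N) : w (μ - 1) = w (ξ - 1) := by
  obtain ⟨i, -, rfl⟩ := hξ.eq_pow_of_pow_eq_one hμ.pow_eq_one
  obtain ⟨j, -, hj⟩ := hμ.eq_pow_of_pow_eq_one hξ.pow_eq_one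
  refine le_antisymm ?_ (w.map_sub_one_le_map_pow_sub_one
    (w.map_eq_zero_of_pow_eq_one (NeZero.ne N) hξ.pow_eq_one) i)
  conv_rhs => rw [← hj]
  exact w.map_sub_one_le_map_pow_sub_one (w.map_eq_zero_of_pow_eq_one (NeZero.ne N) hμ.pow_eq_one) j

theorem map_sub_one_of_isPrimitiveRoot_prime_pow {p : ℕ} [Fact p.Prime] (hwp : w p = 1) {k : ℕ}
    {ξ : K} (hξ : IsPrimitiveRoot ξ (p ^ (k + 1))) :
    w (ξ - 1) = (((p ^ (k + 1)).totient⁻¹ : ℚ) : WithTop ℚ) := by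
  have hone : 1 < p ^ (k + 1) := Nat.one_lt_pow k.succ_ne_zero (Fact.out : p.Prime).one_lt
  have hprod : (p : K) = ∏ μ ∈ primitiveRoots (p ^ (k + 1)) K, (1 - μ) := by
    rw [← eval_one_cyclotomic_prime_pow (R := K) k, cyclotomic_eq_prod_X_sub_primitiveRoots hξ,
      eval_prod]
    simp
  have hterm : ∀ μ ∈ primitiveRoots (p ^ (k + 1)) K, w (1 - μ) = w (ξ - 1) := fun μ hμ => by
    rw [w.map_sub_swap, w.map_sub_one_eq_of_isPrimitiveRoot hξ
      ((mem_primitiveRoots (by omega)).1 hμ)]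
  rw [hprod, w.map_prod, sum_congr rfl hterm, sum_const, hξ.card_primitiveRoots] at hwp
  obtain ⟨r, hr⟩ := WithTop.ne_top_iff_exists.1
    ((w.ne_top_iff).2 (sub_ne_zero.2 (hξ.ne_one hone)))
  rw [← hr, ← WithTop.coe_nsmul, ← WithTop.coe_one, WithTop.coe_inj, nsmul_eq_mul] at hwp
  rw [← hr, eq_inv_of_mul_eq_one_right hwp]

theorem map_eq_of_sub_one_mul_eq_pow_sub_one {p : ℕ} [hp : Fact p.Prime] (hwp : w p = 1)
    {k : ℕ} {η y : K} (hη : IsPrimitiveRoot η (p ^ (k + 2))) (hy : (η - 1) * y = η ^ p - 1) :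
    w y = (((p : ℚ)⁻¹ ^ (k + 1) : ℚ) : WithTop ℚ) := by
  have hηp : IsPrimitiveRoot (η ^ p) (p ^ (k + 1)) :=
    hη.pow (pow_pos hp.out.pos _) (by rw [pow_succ' p (k + 1)])
  have hy0 : y ≠ 0 := by
    rintro rfl
    exact hηp.ne_one (Nat.one_lt_pow k.succ_ne_zero hp.out.one_lt)
      (sub_eq_zero.1 (by rw [← hy, mul_zero]))
  obtain ⟨s, hs⟩ := WithTop.ne_top_iff_exists.1 ((w.ne_top_iff).2 hy0)
  have h := congrArg w hy
  rw [w.map_mul, map_sub_one_of_isPrimitiveRoot_prime_pow w hwp hη,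
    map_sub_one_of_isPrimitiveRoot_prime_pow w hwp hηp, ← hs, ← WithTop.coe_add,
    WithTop.coe_inj, Nat.totient_prime_pow_succ hp.out, Nat.totient_prime_pow_succ hp.out] at h
  rw [← hs, WithTop.coe_inj, eq_sub_of_add_eq' h]
  have hp0 : (p : ℚ) ≠ 0 := by exact_mod_cast hp.out.ne_zero
  have hp1 : (p : ℚ) - 1 ≠ 0 := sub_ne_zero.2 (by exact_mod_cast hp.out.one_lt.ne')
  push_cast [Nat.cast_sub hp.out.one_le]
  rw [inv_pow]
  field_simp
  ring

theorem map_mul_of_eq_coe {x y : K} {a b : ℚ} (hx : w x = a) (hy : w y = b) :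
    w (x * y) = ((a + b : ℚ) : WithTop ℚ) := by
  rw [w.map_mul, hx, hy, WithTop.coe_add]

theorem map_sub_of_eq_coe_of_lt {x y : K} {a b : ℚ} (hx : w x = a) (hy : w y = b) (h : a < b) :
    w (x - y) = a := by
  rw [w.map_sub_eq_of_lt_left (by rw [hx, hy]; exact_mod_cast h), hx]

theorem map_sub_of_eq_coe_of_gt {x y : K} {a b : ℚ} (hx : w x = a) (hy : w y = b) (h : b < a) :
    w (x - y) = b := by
  rw [w.map_sub_eq_of_lt_right (by rw [hx, hy]; exact_mod_cast h), hy]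

theorem map_of_recurrence {N : ℕ} {α : K} (hα : w α = 1) {β : ℕ → K} {e : ℕ → ℚ}
    (hβ : ∀ j, j + 2 ≤ N → w (β j) = e j) (he_lt_two : ∀ j, j + 2 ≤ N → e j < 2)
    (he_mono : ∀ j, j + 3 ≤ N → e j < e (j + 1)) {u : ℕ → K} (hu0 : u 0 = 1) (hu1 : u 1 = α)
    (hu : ∀ j, u (j + 2) = α * u (j + 1) - β j * u j) {m : ℕ} (hm : m ≤ N) :
    w (u m) = (((m % 2 : ℕ) + ∑ j ∈ range (m / 2), e (2 * j) : ℚ) : WithTop ℚ) := by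
  have hα' : w α = ((1 : ℚ) : WithTop ℚ) := hα
  have key : ∀ k, (2 * k ≤ N → w (u (2 * k)) = ((∑ j ∈ range k, e (2 * j) : ℚ) : WithTop ℚ)) ∧
      (2 * k + 1 ≤ N → w (u (2 * k + 1)) = ((1 + ∑ j ∈ range k, e (2 * j) : ℚ) : WithTop ℚ)) := by
    intro k
    induction k with
    | zero =>
      refine ⟨fun _ => by simp [hu0], fun _ => by simp [hu1, hα]⟩
    | succ k ih =>
      -- at even indices the `β`-term dominates, at odd indices the `α`-term
      have heven : 2 * (k + 1) ≤ N →
          w (u (2 * (k + 1))) = ((∑ j ∈ range (k + 1), e (2 * j) : ℚ) : WithTop ℚ) := fun h => by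
        rw [show 2 * (k + 1) = 2 * k + 2 by ring, hu, sum_range_succ, add_comm _ (e (2 * k))]
        refine w.map_sub_of_eq_coe_of_gt (w.map_mul_of_eq_coe hα' (ih.2 (by omega)))
          (w.map_mul_of_eq_coe (hβ _ (by omega)) (ih.1 (by omega))) ?_
        linarith [he_lt_two (2 * k) (by omega)]
      refine ⟨heven, fun h => ?_⟩
      rw [show 2 * (k + 1) + 1 = 2 * k + 1 + 2 by ring, hu]
      refine w.map_sub_of_eq_coe_of_lt (w.map_mul_of_eq_coe hα' (heven (by omega)))
        (w.map_mul_of_eq_coe (hβ _ (by omega)) (ih.2 (by omega))) ?_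
      rw [sum_range_succ]
      linarith [he_mono (2 * k) (by omega)]
  obtain ⟨k, rfl | rfl⟩ := Nat.even_or_odd' m
  · rw [Nat.mul_mod_right, Nat.mul_div_cancel_left k two_pos, Nat.cast_zero, zero_add]
    exact (key k).1 hm
  · rw [show (2 * k + 1) % 2 = 1 by omega, show (2 * k + 1) / 2 = k by omega, Nat.cast_one]
    exact (key k).2 hm

end AddValuation

section TransferMatrix

variable {R : Type*} [CommRing R] {c : R} {φ : ℕ → R} {M : ℕ → Matrix (Fin 2) (Fin 2) R}

theorem transfer_succ_one (hM : ∀ m, M (m + 1) = !![c, 1; -φ (m + 1), 0] * M m) (m : ℕ)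
    (j : Fin 2) : M (m + 1) 1 j = -φ (m + 1) * M m 0 j := by
  simp [hM m, Matrix.mul_apply, Fin.sum_univ_two]

theorem transfer_add_two_zero (hM : ∀ m, M (m + 1) = !![c, 1; -φ (m + 1), 0] * M m) (m : ℕ)
    (j : Fin 2) : M (m + 2) 0 j = c * M (m + 1) 0 j - φ (m + 1) * M m 0 j := by
  rw [hM (m + 1), Matrix.mul_apply, Fin.sum_univ_two, transfer_succ_one hM m j]
  simp [sub_eq_add_neg]

theorem map_transfer_one_eq_zero {K : Type*} [Field K] {f : R →+* K}
    (hM : ∀ m, M (m + 1) = !![c, 1; -φ (m + 1), 0] * M m) {N : ℕ} (hN : N ≠ 0)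
    (hφ : f (φ N) = 0) (j : Fin 2) : f (M N 1 j) = 0 := by
  obtain ⟨m, rfl⟩ := Nat.exists_eq_succ_of_ne_zero hN
  rw [transfer_succ_one hM, map_mul, map_neg, hφ, neg_zero, zero_mul]

variable {K : Type*} [Field K] (w : AddValuation K (WithTop ℚ)) (f : R →+* K) {N : ℕ} {x : ℚ}

theorem AddValuation.map_transfer_zero_zero (hM0 : M 0 = 1)
    (hM : ∀ m, M (m + 1) = !![c, 1; -φ (m + 1), 0] * M m) (hc : w (f c) = 1) (hx0 : 0 < x)
    (hx1 : x < 1) (hφ : ∀ j, j + 2 ≤ N → w (f (φ (j + 1))) = ((x ^ (N - 1 - j) : ℚ) : WithTop ℚ)) :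
    w (f (M N 0 0)) =
      (((N % 2 : ℕ) + ∑ j ∈ range (N / 2), x ^ (N - 1 - 2 * j) : ℚ) : WithTop ℚ) :=
  w.map_of_recurrence (β := fun j => f (φ (j + 1))) (u := fun m => f (M m 0 0)) hc hφ
    (fun _ _ => (pow_le_one₀ hx0.le hx1.le).trans_lt one_lt_two)
    (fun _ _ => pow_lt_pow_right_of_lt_one₀ hx0 hx1 (by omega)) (by simp [hM0])
    (by simp [hM 0, hM0])
    (fun j => by rw [transfer_add_two_zero hM, _root_.map_sub, _root_.map_mul, _root_.map_mul])
    le_rfl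

theorem AddValuation.map_transfer_zero_one (hM0 : M 0 = 1)
    (hM : ∀ m, M (m + 1) = !![c, 1; -φ (m + 1), 0] * M m) (hc : w (f c) = 1) (hx0 : 0 < x)
    (hx1 : x < 1) (hφ : ∀ j, j + 2 ≤ N → w (f (φ (j + 1))) = ((x ^ (N - 1 - j) : ℚ) : WithTop ℚ))
    (hN : N ≠ 0) :
    w (f (M N 0 1)) = ((((N - 1) % 2 : ℕ) +
      ∑ j ∈ range ((N - 1) / 2), x ^ (N - 1 - (2 * j + 1)) : ℚ) : WithTop ℚ) := by
  -- the second column is the first one shifted by one step, so it runs on `φ (j + 2)`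
  have h := w.map_of_recurrence (N := N - 1) (β := fun j => f (φ (j + 2)))
    (u := fun m => f (M (m + 1) 0 1)) hc (fun j hj => hφ (j + 1) (by omega))
    (fun _ _ => (pow_le_one₀ hx0.le hx1.le).trans_lt one_lt_two)
    (fun _ _ => pow_lt_pow_right_of_lt_one₀ hx0 hx1 (by omega)) (by simp [hM 0, hM0])
    (by simp [transfer_add_two_zero hM 0, hM 0, hM0])
    (fun j => by
      show f (M (j + 1 + 2) 0 1) =
        f c * f (M (j + 1 + 1) 0 1) - f (φ (j + 1 + 1)) * f (M (j + 1) 0 1)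
      rw [transfer_add_two_zero hM (j + 1), _root_.map_sub, _root_.map_mul, _root_.map_mul])
    le_rfl
  rwa [Nat.sub_one_add_one hN] at h

end TransferMatrix

section CyclotomicFactors

variable {p : ℕ} [hp : Fact p.Prime] {K : Type*} [Field K] {f : ℤ_[p][X] →+* K} {ζ : K}
  {Φ : ℤ_[p][X]} {n : ℕ}

theorem map_omegaPoly (hf : f X = ζ - 1) (j : ℕ) : f (omegaPoly p j) = ζ ^ p ^ j - 1 := by
  simp [omegaPoly, hf]

theorem map_eq_zero_of_omegaPoly_mul_eq (hf : f X = ζ - 1) (hζ : IsPrimitiveRoot ζ (p ^ n))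
    (hn : 1 ≤ n) (hΦ : omegaPoly p (n - 1) * Φ = omegaPoly p n) : f Φ = 0 := by
  have h := congrArg f hΦ
  rw [map_mul, map_omegaPoly hf, map_omegaPoly hf, hζ.pow_eq_one, sub_self] at h
  refine (mul_eq_zero.1 h).resolve_left (sub_ne_zero.2 ?_)
  exact hζ.pow_ne_one_of_pos_of_lt (pow_ne_zero _ hp.out.ne_zero)
    (Nat.pow_lt_pow_right hp.out.one_lt (by omega))

theorem AddValuation.map_of_omegaPoly_mul_eq (w : AddValuation K (WithTop ℚ)) (hwp : w p = 1)
    (hf : f X = ζ - 1) (hζ : IsPrimitiveRoot ζ (p ^ n)) {i : ℕ} (hi : i + 1 < n)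
    (hΦ : omegaPoly p i * Φ = omegaPoly p (i + 1)) :
    w (f Φ) = (((p : ℚ)⁻¹ ^ (n - 1 - i) : ℚ) : WithTop ℚ) := by
  have hη : IsPrimitiveRoot (ζ ^ p ^ i) (p ^ (n - 1 - i - 1 + 2)) :=
    hζ.pow (pow_pos hp.out.pos _) (by rw [← pow_add]; congr 1; omega)
  have h := congrArg f hΦ
  rw [_root_.map_mul, map_omegaPoly hf, map_omegaPoly hf, pow_succ, pow_mul] at h
  rw [w.map_eq_of_sub_one_mul_eq_pow_sub_one hwp hη h, show n - 1 - i - 1 + 1 = n - 1 - i by omega]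

end CyclotomicFactors

theorem sum_range_inv_pow_eq_sum_Icc (x : ℚ) {k : ℕ} {a b : ℕ → ℕ}
    (h : ∀ j < k, a j = b (k - j)) : ∑ j ∈ range k, x⁻¹ ^ a j = ∑ i ∈ Icc 1 k, (x ^ b i)⁻¹ := by
  rw [← sum_range_reflect, ← Ico_add_one_right_eq_Icc, sum_Ico_eq_sum_range, Nat.add_sub_cancel]
  refine sum_congr rfl fun j hj => ?_
  rw [mem_range] at hj
  rw [inv_pow, h _ (by omega), show k - (k - 1 - j) = 1 + j by omega]

theorem H_matrix_valuation_at_eps_general {p : ℕ} [Fact p.Prime]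
    (n : ℕ) (hn : 1 ≤ n)
    (a : ℤ_[p]) (ha : a.valuation = 1)
    -- a field containing `ℚ_p(ζ_{p^n})`
    {K : Type*} [Field K] [Algebra ℚ_[p] K]
    (ζ : K) (hζ : IsPrimitiveRoot ζ (p ^ n))
    -- the (unique) valuation on `K` extending the `p`-adic valuation of `ℚ_p`
    (v : K → ℚ)
    (hv_mul : ∀ x y : K, x ≠ 0 → y ≠ 0 → v (x * y) = v x + v y)
    (hv_add : ∀ x y : K, x ≠ 0 → y ≠ 0 → x + y ≠ 0 → min (v x) (v y) ≤ v (x + y))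
    (hv_ext : ∀ x : ℚ_[p], x ≠ 0 → v (algebraMap ℚ_[p] K x) = (x.valuation : ℚ))
    -- evaluation of polynomials at `ε_n = ζ − 1`
    (ev : Polynomial ℤ_[p] → K)
    (hev : ∀ q : Polynomial ℤ_[p],
      ev q = Polynomial.eval₂ ((algebraMap ℚ_[p] K).comp (PadicInt.Coe.ringHom)) (ζ - 1) q)
    -- `Φ_m = ω_m/ω_{m−1}` for `m ≥ 1`
    (Phi : ℕ → Polynomial ℤ_[p])
    (hPhi : ∀ m, 1 ≤ m → omegaPoly p (m - 1) * Phi m = omegaPoly p m)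
    -- `C_i = [[a, 1], [−Φ_i, 0]]` and `H_0 = 1`, `H_m = C_m·H_{m−1}`
    (C : ℕ → Matrix (Fin 2) (Fin 2) (Polynomial ℤ_[p]))
    (hC : ∀ i, C i = !![Polynomial.C a, 1; -(Phi i), 0])
    (H : ℕ → Matrix (Fin 2) (Fin 2) (Polynomial ℤ_[p]))
    (hH0 : H 0 = 1) (hH : ∀ m, H (m + 1) = C (m + 1) * H m) :
    -- the second row of `H_n(ε_n)` vanishes
    ev (H n 1 0) = 0 ∧ ev (H n 1 1) = 0 ∧
    -- odd case
    (n % 2 = 1 →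
      v (ev (H n 0 0)) = 1 + ∑ i ∈ Finset.Icc 1 ((n - 1) / 2), ((p : ℚ) ^ (2 * i))⁻¹ ∧
      v (ev (H n 0 1)) = ∑ i ∈ Finset.Icc 1 ((n - 1) / 2), ((p : ℚ) ^ (2 * i - 1))⁻¹) ∧
    -- even case
    (n % 2 = 0 →
      v (ev (H n 0 0)) = ∑ i ∈ Finset.Icc 1 (n / 2), ((p : ℚ) ^ (2 * i - 1))⁻¹ ∧
      v (ev (H n 0 1)) = 1 + ∑ i ∈ Finset.Icc 1 (n / 2 - 1), ((p : ℚ) ^ (2 * i))⁻¹) := by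
  have hp : p.Prime := Fact.out
  set w := addValuationOfFun v hv_mul hv_add
  set f := eval₂RingHom ((algebraMap ℚ_[p] K).comp PadicInt.Coe.ringHom) (ζ - 1)
  have hev' : ∀ g, ev g = f g := hev
  have hwp : w p = 1 := by
    simpa using addValuationOfFun_algebraMap hv_ext (x := p) (Nat.cast_ne_zero.2 hp.ne_zero)
  have hwa : w (f (Polynomial.C a)) = 1 := by
    have ha0 : (a : ℚ_[p]) ≠ 0 := fun h => by simp [PadicInt.coe_eq_zero.1 h] at ha
    rw [show f (Polynomial.C a) = algebraMap ℚ_[p] K a from eval₂_C _ _]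
    simpa [ha] using addValuationOfFun_algebraMap hv_ext ha0
  have hM : ∀ m, H (m + 1) = !![Polynomial.C a, 1; -Phi (m + 1), 0] * H m := fun m => by
    rw [hH, hC]
  have hΦ : ∀ j, j + 2 ≤ n → w (f (Phi (j + 1))) = (((p : ℚ)⁻¹ ^ (n - 1 - j) : ℚ) : WithTop ℚ) :=
    fun j hj => w.map_of_omegaPoly_mul_eq hwp (eval₂_X _ _) hζ (by omega)
      (by simpa using hPhi (j + 1) (by omega))
  have hq0 : (0 : ℚ) < (p : ℚ)⁻¹ := inv_pos.2 (by exact_mod_cast hp.pos)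
  have hq1 : (p : ℚ)⁻¹ < 1 := inv_lt_one_of_one_lt₀ (by exact_mod_cast hp.one_lt)
  have hx := eq_of_addValuationOfFun_eq_coe (w.map_transfer_zero_zero f hH0 hM hwa hq0 hq1 hΦ)
  have hy := eq_of_addValuationOfFun_eq_coe
    (w.map_transfer_zero_one f hH0 hM hwa hq0 hq1 hΦ (by omega))
  have hrow := map_transfer_one_eq_zero hM (by omega)
    (map_eq_zero_of_omegaPoly_mul_eq (f := f) (eval₂_X _ _) hζ hn (hPhi n hn))
  simp only [hev']
  refine ⟨hrow 0, hrow 1, fun hodd => ⟨?_, ?_⟩, fun heven => ⟨?_, ?_⟩⟩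
  · rw [hx, hodd, show n / 2 = (n - 1) / 2 by omega,
      sum_range_inv_pow_eq_sum_Icc (b := fun i => 2 * i) _ fun j hj => by omega, Nat.cast_one]
  · rw [hy, show (n - 1) % 2 = 0 by omega, Nat.cast_zero, zero_add,
      sum_range_inv_pow_eq_sum_Icc (b := fun i => 2 * i - 1) _ fun j hj => by omega]
  · rw [hx, heven, Nat.cast_zero, zero_add,
      sum_range_inv_pow_eq_sum_Icc (b := fun i => 2 * i - 1) _ fun j hj => by omega]
  · rw [hy, show (n - 1) % 2 = 1 by omega, show (n - 1) / 2 = n / 2 - 1 by omega,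
      sum_range_inv_pow_eq_sum_Icc (b := fun i => 2 * i) _ fun j hj => by omega, Nat.cast_one]

/-- Valuations of the entries of `H_n(ε_n)` when `v_p(a) = 1`. -/
theorem H_matrix_valuation_at_eps {p : ℕ} [Fact p.Prime] (hp : Odd p)
    (n : ℕ) (hn : 1 ≤ n)
    (a : ℤ_[p]) (ha : a.valuation = 1)
    -- a field containing `ℚ_p(ζ_{p^n})`
    {K : Type*} [Field K] [Algebra ℚ_[p] K]
    (ζ : K) (hζ : IsPrimitiveRoot ζ (p ^ n))
    -- the (unique) valuation on `K` extending the `p`-adic valuation of `ℚ_p`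
    (v : K → ℚ)
    (hv_mul : ∀ x y : K, x ≠ 0 → y ≠ 0 → v (x * y) = v x + v y)
    (hv_add : ∀ x y : K, x ≠ 0 → y ≠ 0 → x + y ≠ 0 → min (v x) (v y) ≤ v (x + y))
    (hv_ext : ∀ x : ℚ_[p], x ≠ 0 → v (algebraMap ℚ_[p] K x) = (x.valuation : ℚ))
    -- evaluation of polynomials at `ε_n = ζ − 1`
    (ev : Polynomial ℤ_[p] → K)
    (hev : ∀ q : Polynomial ℤ_[p],
      ev q = Polynomial.eval₂ ((algebraMap ℚ_[p] K).comp (PadicInt.Coe.ringHom)) (ζ - 1) q)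
    -- `Φ_m = ω_m/ω_{m−1}` for `m ≥ 1`
    (Phi : ℕ → Polynomial ℤ_[p])
    (hPhi : ∀ m, 1 ≤ m → omegaPoly p (m - 1) * Phi m = omegaPoly p m)
    -- `C_i = [[a, 1], [−Φ_i, 0]]` and `H_0 = 1`, `H_m = C_m·H_{m−1}`
    (C : ℕ → Matrix (Fin 2) (Fin 2) (Polynomial ℤ_[p]))
    (hC : ∀ i, C i = !![Polynomial.C a, 1; -(Phi i), 0])
    (H : ℕ → Matrix (Fin 2) (Fin 2) (Polynomial ℤ_[p]))
    (hH0 : H 0 = 1) (hH : ∀ m, H (m + 1) = C (m + 1) * H m) :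
    -- the second row of `H_n(ε_n)` vanishes
    ev (H n 1 0) = 0 ∧ ev (H n 1 1) = 0 ∧
    -- odd case
    (n % 2 = 1 →
      v (ev (H n 0 0)) = 1 + ∑ i ∈ Finset.Icc 1 ((n - 1) / 2), ((p : ℚ) ^ (2 * i))⁻¹ ∧
      v (ev (H n 0 1)) = ∑ i ∈ Finset.Icc 1 ((n - 1) / 2), ((p : ℚ) ^ (2 * i - 1))⁻¹) ∧
    -- even case
    (n % 2 = 0 →
      v (ev (H n 0 0)) = ∑ i ∈ Finset.Icc 1 (n / 2), ((p : ℚ) ^ (2 * i - 1))⁻¹ ∧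
      v (ev (H n 0 1)) = 1 + ∑ i ∈ Finset.Icc 1 (n / 2 - 1), ((p : ℚ) ^ (2 * i))⁻¹) :=
  H_matrix_valuation_at_eps_general n hn a ha ζ hζ v hv_mul hv_add hv_ext ev hev Phi hPhi C hC H hH0
    hH
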